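/- The dot-product self-attention map Attn(X) = softmax(X W^Q (X W^K)ᵀ / √D) X W^V, viewed as a function of X ∈ ℝ^{N×d} with fixed nonzero weight matrices W^Q, W^K, W^V, is not globally Lipschitz continuous on ℝ^{N×d} whenever N ≥ 2 and W^Q (W^K)ᵀ ≠ 0. -/

import Mathlib

open Matrix

/-- Frobenius norm of a real matrix. -/
noncomputable def frobNorm {m n : Type*} [Fintype m] [Fintype n] (A : Matrix m n ℝ) : ℝ :=
  Real.sqrt (∑ i, ∑ j, (A i j) ^ 2)

/-- Row-wise softmax of a square score matrix. -/
noncomputable def softmaxRows {N : ℕ} (S : Matrix (Fin N) (Fin N) ℝ) :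
    Matrix (Fin N) (Fin N) ℝ :=
  fun i j => Real.exp (S i j) / ∑ k, Real.exp (S i k)

/-- Dot-product self-attention. -/
noncomputable def attn {N d D : ℕ} (Wq Wk Wv : Matrix (Fin d) (Fin D) ℝ)
    (X : Matrix (Fin N) (Fin d) ℝ) : Matrix (Fin N) (Fin D) ℝ :=
  softmaxRows ((1 / Real.sqrt D) • (X * Wq * (X * Wk)ᵀ)) * X * Wv

/-!
Put token `i` at `h • r` and the other `N - 1` tokens at `h⁻¹ • y`, where `r = W^Q W^Kᵀ y`.
The cross scores `σ ⟪h • r, W^Q W^Kᵀ (h⁻¹ • y)⟫ = σ ‖r‖²` do not depend on `h`, while the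
self-score is `O(h²)`. Moving token `i` to `0`, a displacement of size `O(h)`, resets the cross
scores to `0` and so changes the softmax weights by an amount of order one; these weights multiply
values of size `h⁻¹`, so row `i` of the output moves by order `h⁻¹`. After multiplying by `h`, a
Lipschitz bound `C` gives `O(h²)`-close two-level softmax averages, which are continuous in `h`
but differ at `h = 0` because `σ ‖r‖² ≠ 0`.
-/

open Filter Topology

lemma abs_apply_le_frobNorm {m n : Type*} [Fintype m] [Fintype n] (A : Matrix m n ℝ)
    (i : m) (j : n) : |A i j| ≤ frobNorm A := by
  rw [frobNorm, ← Real.sqrt_sq_eq_abs]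
  gcongr
  calc A i j ^ 2 ≤ ∑ j', A i j' ^ 2 :=
        Finset.single_le_sum (fun _ _ => sq_nonneg _) (Finset.mem_univ j)
    _ ≤ ∑ i', ∑ j', A i' j' ^ 2 :=
        Finset.single_le_sum (f := fun i' => ∑ j', A i' j' ^ 2)
          (fun _ _ => by positivity) (Finset.mem_univ i)

lemma frobNorm_smul {m n : Type*} [Fintype m] [Fintype n] (c : ℝ) (A : Matrix m n ℝ) :
    frobNorm (c • A) = |c| * frobNorm A := by
  simp only [frobNorm, Matrix.smul_apply, smul_eq_mul, mul_pow, ← Finset.mul_sum]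
  rw [Real.sqrt_mul (sq_nonneg c), Real.sqrt_sq_eq_abs]

lemma Fintype.sum_ite_eq_add_mul {ι R : Type*} [Fintype ι] [DecidableEq ι] [Ring R] (i : ι)
    (a b : R) :
    ∑ j, (if j = i then a else b) = a + (Fintype.card ι - 1) * b := by
  rw [Fintype.sum_eq_add_sum_compl i, if_pos rfl,
    Finset.sum_congr rfl fun j hj => if_neg (Finset.mem_compl.mp hj ∘ Finset.mem_singleton.mpr),
    Finset.sum_const, Finset.card_compl, Finset.card_singleton, nsmul_eq_mul,
    Nat.cast_sub (Fintype.card_pos_iff.mpr ⟨i⟩)]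
  simp

lemma LinearMap.exists_apply_ne_zero_and_apply_ne_zero {R M P Q : Type*} [Semiring R]
    [AddCommMonoid M] [AddCommMonoid P] [AddCommMonoid Q] [Module R M] [Module R P] [Module R Q]
    {f : M →ₗ[R] P} {g : M →ₗ[R] Q} (hf : f ≠ 0) (hg : g ≠ 0) : ∃ v, f v ≠ 0 ∧ g v ≠ 0 := by
  obtain ⟨v, hv⟩ := DFunLike.ne_iff.mp hf
  obtain ⟨w, hw⟩ := DFunLike.ne_iff.mp hg
  by_cases hgv : g v = 0
  · by_cases hfw : f w = 0
    · exact ⟨v + w, by simpa [hfw] using hv, by simpa [hgv] using hw⟩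
    · exact ⟨w, hfw, hw⟩
  · exact ⟨v, hv, hgv⟩

lemma eq_of_abs_sub_le_mul_sq {f : ℝ → ℝ} {c K : ℝ} (hf : ContinuousAt f 0)
    (hle : ∀ x ≠ 0, |f x - c| ≤ K * x ^ 2) : f 0 = c := by
  have hlim : Tendsto (fun x => |f x - c| - K * x ^ 2) (𝓝[≠] 0) (𝓝 |f 0 - c|) := by
    have hcont : ContinuousAt (fun x => |f x - c| - K * x ^ 2) 0 := by fun_prop
    simpa using hcont.tendsto.mono_left nhdsWithin_le_nhds
  have := le_of_tendsto hlim (eventually_nhdsWithin_of_forall fun x hx => sub_nonpos.mpr (hle x hx))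
  exact sub_eq_zero.mp (abs_nonpos_iff.mp this)

noncomputable def twoLevelSoftmaxAvg (n a b x z : ℝ) : ℝ :=
  (Real.exp a * x + n * (Real.exp b * z)) / (Real.exp a + n * Real.exp b)

lemma mul_twoLevelSoftmaxAvg (c n a b x z : ℝ) :
    c * twoLevelSoftmaxAvg n a b x z = twoLevelSoftmaxAvg n a b (c * x) (c * z) := by
  simp only [twoLevelSoftmaxAvg]
  ring

lemma twoLevelSoftmaxAvg_ne_of_ne {n a b b' z : ℝ} (hn : 0 < n) (hz : z ≠ 0) (hb : b ≠ b') :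
    twoLevelSoftmaxAvg n a b 0 z ≠ twoLevelSoftmaxAvg n a b' 0 z := by
  have hexp : Real.exp b ≠ Real.exp b' := Real.exp_injective.ne hb
  rw [twoLevelSoftmaxAvg, twoLevelSoftmaxAvg, ne_eq, div_eq_div_iff (by positivity) (by positivity)]
  intro heq
  apply hexp
  have key : n * z * Real.exp a * (Real.exp b - Real.exp b') = 0 := by linear_combination heq
  have hnz : n * z * Real.exp a ≠ 0 := by positivity
  exact sub_eq_zero.mp ((mul_eq_zero.mp key).resolve_left hnz)

lemma softmaxRows_mul_apply_of_two_levels {N : ℕ} {ι : Type*} [Fintype ι]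
    {S : Matrix (Fin N) (Fin N) ℝ} {V : Matrix (Fin N) ι ℝ} {i : Fin N} {q : ι} {a b x z : ℝ}
    (hS : ∀ j, S i j = if j = i then a else b) (hV : ∀ j, V j q = if j = i then x else z) :
    (softmaxRows S * V) i q = twoLevelSoftmaxAvg ((N : ℝ) - 1) a b x z := by
  have hterm : ∀ j, Real.exp (S i j) * V j q = if j = i then Real.exp a * x else Real.exp b * z :=
    fun j => by rw [hS, hV]; split_ifs <;> rfl
  have hden : ∀ j, Real.exp (S i j) = if j = i then Real.exp a else Real.exp b :=
    fun j => by rw [hS]; split_ifs <;> rfl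
  simp only [mul_apply, softmaxRows, div_mul_eq_mul_div, ← Finset.sum_div, hterm]
  simp only [hden, Fintype.sum_ite_eq_add_mul, Fintype.card_fin, twoLevelSoftmaxAvg]

lemma mul_mul_transpose_apply {m n o R : Type*} [Fintype n] [Fintype o] [CommSemiring R]
    (X : Matrix m n R) (A B : Matrix n o R) (i j : m) :
    (X * A * (X * B)ᵀ) i j = X i ⬝ᵥ (A * Bᵀ) *ᵥ X j := by
  rw [Matrix.transpose_mul, ← Matrix.mul_assoc, Matrix.mul_assoc X A, mul_apply,
    dotProduct_mulVec, ← mul_apply_eq_vecMul]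
  rfl

lemma attn_apply_of_rows {N d D : ℕ} (Wq Wk Wv : Matrix (Fin d) (Fin D) ℝ)
    {X : Matrix (Fin N) (Fin d) ℝ} {i : Fin N} {u w : Fin d → ℝ}
    (hX : ∀ j, X j = if j = i then u else w) (q : Fin D) :
    attn Wq Wk Wv X i q = twoLevelSoftmaxAvg ((N : ℝ) - 1)
      (1 / Real.sqrt D * (u ⬝ᵥ (Wq * Wkᵀ) *ᵥ u)) (1 / Real.sqrt D * (u ⬝ᵥ (Wq * Wkᵀ) *ᵥ w))
      ((u ᵥ* Wv) q) ((w ᵥ* Wv) q) := by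
  rw [attn, Matrix.mul_assoc]
  apply softmaxRows_mul_apply_of_two_levels
  · intro j
    rw [Matrix.smul_apply, mul_mul_transpose_apply, hX i, if_pos rfl, hX j, smul_eq_mul]
    split_ifs <;> rfl
  · intro j
    rw [mul_apply_eq_vecMul, hX j]
    split_ifs <;> rfl

lemma mul_attn_apply_of_scaled_rows {N d D : ℕ} (Wq Wk Wv : Matrix (Fin d) (Fin D) ℝ)
    {X : Matrix (Fin N) (Fin d) ℝ} {i : Fin N} {u w : Fin d → ℝ} {h : ℝ} (hh : h ≠ 0)
    (hX : ∀ j, X j = if j = i then h • u else h⁻¹ • w) (q : Fin D) :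
    h * attn Wq Wk Wv X i q = twoLevelSoftmaxAvg ((N : ℝ) - 1)
      (1 / Real.sqrt D * (h ^ 2 * (u ⬝ᵥ (Wq * Wkᵀ) *ᵥ u)))
      (1 / Real.sqrt D * (u ⬝ᵥ (Wq * Wkᵀ) *ᵥ w)) (h ^ 2 * (u ᵥ* Wv) q) ((w ᵥ* Wv) q) := by
  rw [attn_apply_of_rows Wq Wk Wv hX, mul_twoLevelSoftmaxAvg]
  simp only [mulVec_smul, dotProduct_smul, smul_dotProduct, smul_vecMul, Pi.smul_apply, smul_eq_mul]
  congr 1 <;> field_simp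

lemma Continuous.twoLevelSoftmaxAvg {α : Type*} [TopologicalSpace α] {n : ℝ} (hn : 0 ≤ n)
    {a b x z : α → ℝ} (ha : Continuous a) (hb : Continuous b) (hx : Continuous x)
    (hz : Continuous z) :
    Continuous fun t => twoLevelSoftmaxAvg n (a t) (b t) (x t) (z t) :=
  Continuous.div (by fun_prop) (by fun_prop) fun _ =>
    (add_pos_of_pos_of_nonneg (Real.exp_pos _) (mul_nonneg hn (Real.exp_pos _).le)).ne'

lemma abs_twoLevelSoftmaxAvg_sub_le_of_lipschitz {N d D : ℕ}
    {Wq Wk Wv : Matrix (Fin d) (Fin D) ℝ} {C : ℝ} (hC : ∀ X Y : Matrix (Fin N) (Fin d) ℝ,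
      frobNorm (attn Wq Wk Wv X - attn Wq Wk Wv Y) ≤ C * frobNorm (X - Y))
    (i : Fin N) (u w : Fin d → ℝ) (q : Fin D) :
    ∀ h ≠ 0, |twoLevelSoftmaxAvg ((N : ℝ) - 1)
        (1 / Real.sqrt D * (h ^ 2 * (u ⬝ᵥ (Wq * Wkᵀ) *ᵥ u)))
        (1 / Real.sqrt D * (u ⬝ᵥ (Wq * Wkᵀ) *ᵥ w)) (h ^ 2 * (u ᵥ* Wv) q) ((w ᵥ* Wv) q) -
          twoLevelSoftmaxAvg ((N : ℝ) - 1) 0 0 0 ((w ᵥ* Wv) q)| ≤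
      C * frobNorm (of (Pi.single i u)) * h ^ 2 := by
  intro h hh
  set X : Matrix (Fin N) (Fin d) ℝ := of fun j => if j = i then h • u else h⁻¹ • w
  set X' : Matrix (Fin N) (Fin d) ℝ := of fun j => if j = i then 0 else h⁻¹ • w
  have hX := mul_attn_apply_of_scaled_rows Wq Wk Wv hh (X := X) (fun j => rfl) q
  have hX' := mul_attn_apply_of_scaled_rows Wq Wk Wv hh (X := X') (u := 0) (w := w)
    (fun j => by rw [smul_zero]; rfl) q
  simp only [zero_dotProduct, zero_vecMul, Pi.zero_apply, mul_zero] at hX'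
  have hXX' : X - X' = h • of (Pi.single i u) := by
    ext j k
    by_cases hj : j = i <;> simp [X, X', hj]
  calc _ = |h| * |(attn Wq Wk Wv X - attn Wq Wk Wv X') i q| := by
        rw [← hX, ← hX', ← mul_sub, abs_mul, Matrix.sub_apply]
    _ ≤ |h| * (C * frobNorm (X - X')) := by
        gcongr
        exact (abs_apply_le_frobNorm _ i q).trans (hC X X')
    _ = C * frobNorm (of (Pi.single i u)) * h ^ 2 := by
        rw [hXX', frobNorm_smul, ← sq_abs h]
        ring

theorem attn_not_globally_lipschitz_general {N d D : ℕ} (hN : 2 ≤ N)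
    (Wq Wk Wv : Matrix (Fin d) (Fin D) ℝ)
    (hWv : Wv ≠ 0)
    (hQK : Wq * Wkᵀ ≠ 0) :
    ¬ ∃ C : ℝ, ∀ X Y : Matrix (Fin N) (Fin d) ℝ,
      frobNorm (attn Wq Wk Wv X - attn Wq Wk Wv Y) ≤ C * frobNorm (X - Y) := by
  rintro ⟨C, hC⟩
  have hσ : 1 / Real.sqrt D ≠ 0 := by
    have hD : D ≠ 0 := by rintro rfl; exact hQK (by simp [Subsingleton.elim Wq 0])
    positivity
  have hn : (0 : ℝ) < N - 1 := by
    have : (2 : ℝ) ≤ N := by exact_mod_cast hN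
    linarith
  obtain ⟨y, hMy, hWvy⟩ := LinearMap.exists_apply_ne_zero_and_apply_ne_zero
    (toLin'.map_ne_zero_iff.mpr hQK) (toLin'.map_ne_zero_iff.mpr (transpose_eq_zero.not.mpr hWv))
  rw [toLin'_apply] at hMy
  rw [toLin'_apply, mulVec_transpose] at hWvy
  obtain ⟨q, hq⟩ := Function.ne_iff.mp hWvy
  set r := (Wq * Wkᵀ) *ᵥ y
  have hlim := eq_of_abs_sub_le_mul_sq ?_
    (abs_twoLevelSoftmaxAvg_sub_le_of_lipschitz hC ⟨0, by omega⟩ r y q)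
  · simp only [ne_eq, OfNat.ofNat_ne_zero, not_false_eq_true, zero_pow, zero_mul, mul_zero] at hlim
    exact twoLevelSoftmaxAvg_ne_of_ne hn hq
      (mul_ne_zero hσ (dotProduct_self_eq_zero.not.mpr hMy)) hlim
  · exact (Continuous.twoLevelSoftmaxAvg hn.le (by fun_prop) (by fun_prop) (by fun_prop)
      (by fun_prop)).continuousAt

/-- Dot-product self-attention with fixed nonzero weight matrices is not globally
Lipschitz continuous on `ℝ^{N×d}` (w.r.t. the Frobenius norm) when `N ≥ 2` and
`W^Q (W^K)ᵀ ≠ 0`. -/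
theorem attn_not_globally_lipschitz {N d D : ℕ} (hN : 2 ≤ N) (hD : 0 < D)
    (Wq Wk Wv : Matrix (Fin d) (Fin D) ℝ)
    (hWq : Wq ≠ 0) (hWk : Wk ≠ 0) (hWv : Wv ≠ 0)
    (hQK : Wq * Wkᵀ ≠ 0) :
    ¬ ∃ C : ℝ, ∀ X Y : Matrix (Fin N) (Fin d) ℝ,
      frobNorm (attn Wq Wk Wv X - attn Wq Wk Wv Y) ≤ C * frobNorm (X - Y) :=
  attn_not_globally_lipschitz_general hN Wq Wk Wv hWv hQK
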